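/- arXiv:gr-qc/0702101 — 6 statements merged into one kernel-verified Lean document; each statement's English description precedes it below -/
import Mathlib

section
/- Let f : [V, v] → ℝ be integrable with ∫_V^v f ≤ ε and ∫_V^v |f| ≤ M, and let r : [V, v] → ℝ satisfy r₊ − δ₁ ≤ r ≤ r₊ with 0 < δ₁ ≤ r₊. Then ∫_V^v 2r(ṽ)³ f(ṽ) dṽ ≤ 2r₊³ε + 6r₊²δ₁M. -/
/-! Since `r ≤ r₊`, where `f ≥ 0` the weight `2r³` is at most `2r₊³`; where `f < 0` it is at least
`2(r₊ − δ₁)³ ≥ 2r₊³ − 6r₊²δ₁`. Hence pointwise `2r³f ≤ 2r₊³f + 6r₊²δ₁|f|`, and integrating gives the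
bound. -/

theorem cube_sub_cube_le {R s δ : ℝ} (hs : 0 ≤ s) (hsR : s ≤ R) (hRs : R - δ ≤ s) :
    R ^ 3 - s ^ 3 ≤ 3 * R ^ 2 * δ := by
  have hsum : R ^ 2 + R * s + s ^ 2 ≤ 3 * R ^ 2 := by nlinarith
  calc R ^ 3 - s ^ 3 = (R - s) * (R ^ 2 + R * s + s ^ 2) := by ring
    _ ≤ δ * (3 * R ^ 2) := by gcongr <;> nlinarith
    _ = 3 * R ^ 2 * δ := by ring

theorem cube_mul_le_cube_mul_add_abs {R s δ : ℝ} (hs : 0 ≤ s) (hsR : s ≤ R) (hRs : R - δ ≤ s)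
    (y : ℝ) : s ^ 3 * y ≤ R ^ 3 * y + 3 * R ^ 2 * δ * |y| := by
  rcases le_or_gt 0 y with hy | hy
  · have hδ : 0 ≤ δ := by linarith
    have hcube : s ^ 3 ≤ R ^ 3 := pow_le_pow_left₀ hs hsR 3
    have hrem : 0 ≤ 3 * R ^ 2 * δ * |y| := by positivity
    nlinarith [mul_le_mul_of_nonneg_right hcube hy]
  · rw [abs_of_neg hy]
    nlinarith [mul_le_mul_of_nonneg_right (cube_sub_cube_le hs hsR hRs) (neg_pos.2 hy).le]

/-- If `∫ f ≤ ε`, `∫ |f| ≤ M`, and `r₊ − δ₁ ≤ r ≤ r₊` with `0 < δ₁ ≤ r₊`, then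
`∫ 2r³f ≤ 2r₊³ε + 6r₊²δ₁M`. -/
theorem stmt7 (V v rplus δ₁ ε M : ℝ) (hVv : V ≤ v) (hδ₁ : 0 < δ₁) (hδr : δ₁ ≤ rplus)
    (f r : ℝ → ℝ)
    (hfint : IntervalIntegrable f MeasureTheory.volume V v)
    (hrfint : IntervalIntegrable (fun x => 2 * r x ^ 3 * f x) MeasureTheory.volume V v)
    (habsint : IntervalIntegrable (fun x => |f x|) MeasureTheory.volume V v)
    (hintf : (∫ x in V..v, f x) ≤ ε)
    (hintabs : (∫ x in V..v, |f x|) ≤ M)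
    (hrlow : ∀ x ∈ Set.Icc V v, rplus - δ₁ ≤ r x)
    (hrhigh : ∀ x ∈ Set.Icc V v, r x ≤ rplus) :
    (∫ x in V..v, 2 * r x ^ 3 * f x) ≤ 2 * rplus ^ 3 * ε + 6 * rplus ^ 2 * δ₁ * M := by
  have hrplus : 0 ≤ rplus := hδ₁.le.trans hδr
  have hpointwise : ∀ x ∈ Set.Icc V v,
      2 * r x ^ 3 * f x ≤ 2 * rplus ^ 3 * f x + 6 * rplus ^ 2 * δ₁ * |f x| := fun x hx => by
    have := cube_mul_le_cube_mul_add_abs (by linarith [hrlow x hx]) (hrhigh x hx) (hrlow x hx) (f x)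
    linarith
  calc (∫ x in V..v, 2 * r x ^ 3 * f x)
      ≤ ∫ x in V..v, 2 * rplus ^ 3 * f x + 6 * rplus ^ 2 * δ₁ * |f x| :=
        intervalIntegral.integral_mono_on hVv hrfint
          ((hfint.const_mul _).add (habsint.const_mul _)) hpointwise
    _ = 2 * rplus ^ 3 * (∫ x in V..v, f x) + 6 * rplus ^ 2 * δ₁ * ∫ x in V..v, |f x| := by
        rw [intervalIntegral.integral_add (hfint.const_mul _) (habsint.const_mul _),
          intervalIntegral.integral_const_mul, intervalIntegral.integral_const_mul]
    _ ≤ 2 * rplus ^ 3 * ε + 6 * rplus ^ 2 * δ₁ * M := by gcongr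
end

section
/- Let γ(v) = (u(v), v) parameterize a curve in a 1+1 Lorentzian manifold with metric −Ω²du dv, along which du/dv = −2r³T_{vv}/(Ω²α) with r ≤ r₊, α ≥ α₀ > 0, and T_{vv}(γ(v)) ≤ c₃ v^{−2−ε} for constants c₃ ≥ 0, ε > 0. Then the length ∫_V^∞ |γ'(v)| dv = ∫_V^∞ √(2r³T_{vv}/α) dv is finite, bounded by ∫_V^∞ √(2r₊³/α₀) √(c₃) v^{−1−ε/2} dv < ∞. -/
open MeasureTheory Set

theorem integrableOn_Ici_of_norm_le_mul_rpow {f : ℝ → ℝ} {V C s : ℝ} (hV : 0 < V)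
    (hs : s < -1) (hf : ContinuousOn f (Ici V)) (hbound : ∀ v ∈ Ici V, ‖f v‖ ≤ C * v ^ s) :
    IntegrableOn f (Ici V) := by
  have hmajorant : IntegrableOn (fun v => C * v ^ s) (Ici V) := by
    rw [integrableOn_Ici_iff_integrableOn_Ioi]
    exact (integrableOn_Ioi_rpow_of_lt hs hV).const_mul C
  refine hmajorant.mono' (hf.aestronglyMeasurable measurableSet_Ici) ?_
  filter_upwards [ae_restrict_mem measurableSet_Ici] with v hv using hbound v hv

theorem Real.sqrt_mul_rpow {K v : ℝ} (hv : 0 ≤ v) (s : ℝ) :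
    √(K * v ^ s) = √K * v ^ (s / 2) := by
  rw [Real.sqrt_mul' K (Real.rpow_nonneg hv s), Real.sqrt_eq_rpow (v ^ s), ← Real.rpow_mul hv,
    mul_one_div]

theorem two_mul_pow_three_mul_div_le {r R T B a a₀ : ℝ} (hr : 0 ≤ r) (hrR : r ≤ R)
    (hTB : T ≤ B) (hB : 0 ≤ B) (ha₀ : 0 < a₀) (ha : a₀ ≤ a) :
    2 * r ^ 3 * T / a ≤ 2 * R ^ 3 * B / a₀ := by
  have hnum : 2 * r ^ 3 * T ≤ 2 * R ^ 3 * B :=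
    calc 2 * r ^ 3 * T ≤ 2 * r ^ 3 * B := by gcongr
      _ ≤ 2 * R ^ 3 * B := by gcongr
  have hR : 0 ≤ R := hr.trans hrR
  calc 2 * r ^ 3 * T / a ≤ 2 * R ^ 3 * B / a := div_le_div_of_nonneg_right hnum (ha₀.le.trans ha)
    _ ≤ 2 * R ^ 3 * B / a₀ := by gcongr

theorem stmt9_general (V rplus α₀ c₃ ε : ℝ) (hV : 0 < V) (hα₀ : 0 < α₀) (hc₃ : 0 ≤ c₃)
    (hε : 0 < ε) (r α Tvv : ℝ → ℝ)
    (hr0 : ∀ v ∈ Set.Ici V, 0 ≤ r v)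
    (hrhigh : ∀ v ∈ Set.Ici V, r v ≤ rplus)
    (hαlow : ∀ v ∈ Set.Ici V, α₀ ≤ α v)
    (hTdecay : ∀ v ∈ Set.Ici V, Tvv v ≤ c₃ * v ^ (-2 - ε : ℝ))
    (hcont : ContinuousOn (fun v => Real.sqrt (2 * r v ^ 3 * Tvv v / α v)) (Set.Ici V)) :
    MeasureTheory.IntegrableOn
      (fun v => Real.sqrt (2 * r v ^ 3 * Tvv v / α v)) (Set.Ici V)
      MeasureTheory.volume := by
  refine integrableOn_Ici_of_norm_le_mul_rpow (C := √(2 * rplus ^ 3 * c₃ / α₀)) hV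
    (by linarith : -1 - ε / 2 < -1) hcont fun v hv => ?_
  have hv0 : 0 ≤ v := hV.le.trans hv
  have hdecay : 0 ≤ c₃ * v ^ (-2 - ε : ℝ) := mul_nonneg hc₃ (Real.rpow_nonneg hv0 _)
  calc ‖√(2 * r v ^ 3 * Tvv v / α v)‖ = √(2 * r v ^ 3 * Tvv v / α v) :=
        Real.norm_of_nonneg (Real.sqrt_nonneg _)
    _ ≤ √(2 * rplus ^ 3 * c₃ / α₀ * v ^ (-2 - ε : ℝ)) := by
        refine Real.sqrt_le_sqrt ((two_mul_pow_three_mul_div_le (hr0 v hv) (hrhigh v hv)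
          (hTdecay v hv) hdecay hα₀ (hαlow v hv)).trans_eq ?_)
        ring
    _ = √(2 * rplus ^ 3 * c₃ / α₀) * v ^ (-1 - ε / 2) := by
        rw [Real.sqrt_mul_rpow hv0]
        ring_nf

/-- Along a curve `γ(v) = (u(v), v)` with `|γ'(v)|² = 2r³T_{vv}/α`, if `r ≤ r₊`,
`α ≥ α₀ > 0`, and `T_{vv}(v) ≤ c₃ v^{−2−ε}`, then the length
`∫_V^∞ √(2r³T_{vv}/α) dv` is finite. -/
theorem stmt9 (V rplus α₀ c₃ ε : ℝ) (hV : 0 < V) (hα₀ : 0 < α₀) (hc₃ : 0 ≤ c₃)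
    (hε : 0 < ε) (r α Tvv : ℝ → ℝ)
    (hr0 : ∀ v ∈ Set.Ici V, 0 ≤ r v)
    (hrhigh : ∀ v ∈ Set.Ici V, r v ≤ rplus)
    (hαlow : ∀ v ∈ Set.Ici V, α₀ ≤ α v)
    (hT0 : ∀ v ∈ Set.Ici V, 0 ≤ Tvv v)
    (hTdecay : ∀ v ∈ Set.Ici V, Tvv v ≤ c₃ * v ^ (-2 - ε : ℝ))
    (hcont : ContinuousOn (fun v => Real.sqrt (2 * r v ^ 3 * Tvv v / α v)) (Set.Ici V)) :
    MeasureTheory.IntegrableOn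
      (fun v => Real.sqrt (2 * r v ^ 3 * Tvv v / α v)) (Set.Ici V)
      MeasureTheory.volume :=
  stmt9_general V rplus α₀ c₃ ε hV hα₀ hc₃ hε r α Tvv hr0 hrhigh hαlow hTdecay hcont
end

section
/- For constants a₀ > 0, p > 0, and v₁ ≥ e with (p/a₀)(log v)/v < 1 for all v ≥ v₁, one has for all v ≥ v₁: e^{−a₀v}∫_{v₁}^v ṽ^{−p−1}e^{a₀ṽ}dṽ ≤ p^{-1}v^{−p}[(1 − (p/a₀)v^{-1}log v)^{−p} − 1 + v₁^{−p}]. -/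
open Real Set intervalIntegral MeasureTheory
open scoped Interval

lemma intervalIntegrable_rpow_mul_exp (a₀ r : ℝ) {a b : ℝ} (h : (0 : ℝ) ∉ [[a, b]]) :
    IntervalIntegrable (fun t => t ^ r * exp (a₀ * t)) volume a b :=
  (intervalIntegrable_rpow (Or.inr h)).mul_continuousOn (by fun_prop)

lemma integral_rpow_mul_exp_le {a₀ p a b : ℝ} (ha₀ : 0 ≤ a₀) (hp : p ≠ 0) (ha : 0 < a)
    (hab : a ≤ b) :
    ∫ t in a..b, t ^ (-p - 1) * exp (a₀ * t) ≤ exp (a₀ * b) * ((a ^ (-p) - b ^ (-p)) / p) := by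
  have h0 : (0 : ℝ) ∉ [[a, b]] := notMem_uIcc_of_lt ha (ha.trans_le hab)
  calc ∫ t in a..b, t ^ (-p - 1) * exp (a₀ * t)
      ≤ ∫ t in a..b, t ^ (-p - 1) * exp (a₀ * b) :=
        integral_mono_on hab (intervalIntegrable_rpow_mul_exp a₀ _ h0)
          ((intervalIntegrable_rpow (Or.inr h0)).mul_const _) fun t ht =>
          mul_le_mul_of_nonneg_left (exp_le_exp.2 (mul_le_mul_of_nonneg_left ht.2 ha₀))
            (rpow_nonneg (ha.le.trans ht.1) _)
    _ = exp (a₀ * b) * ((a ^ (-p) - b ^ (-p)) / p) := by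
        rw [intervalIntegral.integral_mul_const, integral_rpow (Or.inr ⟨by simpa using hp, h0⟩),
          sub_add_cancel]
        field_simp
        ring

/-- Split at `c`: on `[c, b]` bound `exp (a₀ t) ≤ exp (a₀ b)`, on `[a, c]` bound
`exp (a₀ t) ≤ exp (a₀ c)`. If `c ≤ a` the first bound alone suffices. -/
lemma exp_neg_mul_integral_rpow_mul_exp_le {a₀ p a b c : ℝ} (ha₀ : 0 ≤ a₀) (hp : 0 < p)
    (ha : 0 < a) (hab : a ≤ b) (hc : 0 < c) (hcb : c ≤ b) :
    exp (-a₀ * b) * ∫ t in a..b, t ^ (-p - 1) * exp (a₀ * t) ≤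
      (c ^ (-p) - b ^ (-p)) / p + exp (a₀ * (c - b)) * a ^ (-p) / p := by
  have upper {s : ℝ} (hs : 0 < s) (hsb : s ≤ b) :
      exp (-a₀ * b) * ∫ t in s..b, t ^ (-p - 1) * exp (a₀ * t) ≤ (s ^ (-p) - b ^ (-p)) / p :=
    calc exp (-a₀ * b) * ∫ t in s..b, t ^ (-p - 1) * exp (a₀ * t)
        ≤ exp (-a₀ * b) * (exp (a₀ * b) * ((s ^ (-p) - b ^ (-p)) / p)) := by
          gcongr
          exact integral_rpow_mul_exp_le ha₀ hp.ne' hs hsb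
      _ = (s ^ (-p) - b ^ (-p)) / p := by rw [← mul_assoc, ← exp_add]; simp
  rcases le_total c a with hca | hac
  · calc exp (-a₀ * b) * ∫ t in a..b, t ^ (-p - 1) * exp (a₀ * t)
        ≤ (a ^ (-p) - b ^ (-p)) / p := upper ha hab
      _ ≤ (c ^ (-p) - b ^ (-p)) / p := by
          have := rpow_le_rpow_of_nonpos hc hca (neg_nonpos.2 hp.le)
          gcongr
      _ ≤ _ := le_add_of_nonneg_right (by positivity)
  · have lower : exp (-a₀ * b) * ∫ t in a..c, t ^ (-p - 1) * exp (a₀ * t) ≤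
        exp (a₀ * (c - b)) * a ^ (-p) / p :=
      calc exp (-a₀ * b) * ∫ t in a..c, t ^ (-p - 1) * exp (a₀ * t)
          ≤ exp (-a₀ * b) * (exp (a₀ * c) * ((a ^ (-p) - c ^ (-p)) / p)) := by
            gcongr
            exact integral_rpow_mul_exp_le ha₀ hp.ne' ha hac
        _ ≤ exp (a₀ * (c - b)) * a ^ (-p) / p := by
            rw [← mul_assoc, ← exp_add, mul_div_assoc,
              show -a₀ * b + a₀ * c = a₀ * (c - b) by ring]
            gcongr
            linarith [rpow_nonneg hc.le (-p)]
    rw [← integral_add_adjacent_intervals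
      (intervalIntegrable_rpow_mul_exp a₀ _ (notMem_uIcc_of_lt ha hc))
      (intervalIntegrable_rpow_mul_exp a₀ _ (notMem_uIcc_of_lt hc (hc.trans_le hcb))), mul_add]
    linarith [upper hc hcb]

/-- For `a₀ > 0`, `p > 0`, `v₁ ≥ e` with `(p/a₀)(log v)/v < 1` for all `v ≥ v₁`,
one has `e^{−a₀v}∫_{v₁}^v ṽ^{−p−1}e^{a₀ṽ}dṽ
 ≤ p⁻¹ v^{−p}[(1 − (p/a₀)v⁻¹ log v)^{−p} − 1 + v₁^{−p}]`. -/
theorem stmt12 (a₀ p v₁ : ℝ) (ha₀ : 0 < a₀) (hp : 0 < p)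
    (hv₁ : Real.exp 1 ≤ v₁)
    (hsmall : ∀ v ∈ Set.Ici v₁, p / a₀ * Real.log v / v < 1) :
    ∀ v ∈ Set.Ici v₁,
      Real.exp (-a₀ * v) * ∫ t in v₁..v, t ^ (-p - 1 : ℝ) * Real.exp (a₀ * t) ≤
      p⁻¹ * v ^ (-p : ℝ) *
        ((1 - p / a₀ * v⁻¹ * Real.log v) ^ (-p : ℝ) - 1 + v₁ ^ (-p : ℝ)) := by
  intro v hv
  have hv₁0 : 0 < v₁ := (exp_pos 1).trans_le hv₁
  have hv0 : 0 < v := hv₁0.trans_le hv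
  have hlog : 0 < log v := log_pos ((one_lt_exp_iff.2 one_pos).trans_le (hv₁.trans hv))
  set x := p / a₀ * v⁻¹ * log v
  have hx0 : 0 ≤ x := by positivity
  have hx1 : x < 1 := by simpa [x, div_eq_mul_inv, mul_right_comm] using hsmall v hv
  have hexp : exp (a₀ * (v * (1 - x) - v)) = v ^ (-p) := by
    rw [rpow_def_of_pos hv0]
    congr 1
    simp only [x]
    field_simp
    ring
  -- split at `c = v * (1 - x) = v - (p / a₀) log v`, where `exp (a₀ (c - v)) = v ^ (-p)`
  calc exp (-a₀ * v) * ∫ t in v₁..v, t ^ (-p - 1) * exp (a₀ * t)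
      ≤ ((v * (1 - x)) ^ (-p) - v ^ (-p)) / p + exp (a₀ * (v * (1 - x) - v)) * v₁ ^ (-p) / p :=
        exp_neg_mul_integral_rpow_mul_exp_le ha₀.le hp hv₁0 hv (by nlinarith) (by nlinarith)
    _ = p⁻¹ * v ^ (-p) * ((1 - x) ^ (-p) - 1 + v₁ ^ (-p)) := by
        rw [hexp, mul_rpow hv0.le (by linarith)]
        ring
end

section
/- Let φ : [0, u] → ℝ (at fixed v) satisfy ∂_u log|∂_vφ| ≤ −(c₄r₊/(4c₃) + 1)∂_u log r, with r₊ − δ ≤ r ≤ r₊, |∂_vφ(0)| < ε″/2, and δ < r₊(1 − 2^{−(c₄r₊/(4c₃)+1)^{-1}}). Then |∂_vφ(u)| < ε″. -/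
/-!
With `k = c₄r₊/(4c₃) + 1`, the hypothesis says that `log |φ| + k log r` is nonincreasing, so
`|φ(u)| ≤ |φ(0)| (r(0)/r(u))^k ≤ |φ(0)| (r₊/(r₊ - δ))^k`, and the smallness of `δ` is exactly
what makes `(r₊/(r₊ - δ))^k < 2`.
-/

open Real Set

section Monotonicity

variable {φ L r r' : ℝ → ℝ} {k a b : ℝ}

theorem antitoneOn_log_abs_add_mul_log_of_deriv_le
    (hr : ∀ t ∈ Icc a b, r t ≠ 0)
    (hφ : ∀ t ∈ Icc a b, HasDerivAt (fun x => log |φ x|) (L t) t)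
    (hr' : ∀ t ∈ Icc a b, HasDerivAt r (r' t) t)
    (hL : ∀ t ∈ Icc a b, L t ≤ -k * (r' t / r t)) :
    AntitoneOn (fun t => log |φ t| + k * log (r t)) (Icc a b) := by
  have hderiv : ∀ t ∈ Icc a b,
      HasDerivAt (fun t => log |φ t| + k * log (r t)) (L t + k * (r' t / r t)) t :=
    fun t ht => (hφ t ht).add (((hr' t ht).log (hr t ht)).const_mul k)
  refine antitoneOn_of_deriv_nonpos (convex_Icc a b)
    (fun t ht => (hderiv t ht).continuousAt.continuousWithinAt)
    (fun t ht => (hderiv t (interior_subset ht)).differentiableAt.differentiableWithinAt)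
    (fun t ht => ?_)
  rw [(hderiv t (interior_subset ht)).deriv]
  linarith [hL t (interior_subset ht)]

theorem abs_le_abs_mul_div_rpow_of_deriv_log_le (hab : a ≤ b)
    (hφne : ∀ t ∈ Icc a b, φ t ≠ 0) (hr : ∀ t ∈ Icc a b, 0 < r t)
    (hφ : ∀ t ∈ Icc a b, HasDerivAt (fun x => log |φ x|) (L t) t)
    (hr' : ∀ t ∈ Icc a b, HasDerivAt r (r' t) t)
    (hL : ∀ t ∈ Icc a b, L t ≤ -k * (r' t / r t)) :
    |φ b| ≤ |φ a| * (r a / r b) ^ k := by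
  have ha : a ∈ Icc a b := left_mem_Icc.mpr hab
  have hb : b ∈ Icc a b := right_mem_Icc.mpr hab
  have hφa := abs_pos.mpr (hφne a ha)
  have hra := hr a ha
  have hrb := hr b hb
  have hmono := antitoneOn_log_abs_add_mul_log_of_deriv_le (fun t ht => (hr t ht).ne')
    hφ hr' hL ha hb hab
  rw [← log_le_log_iff (abs_pos.mpr (hφne b hb)) (by positivity),
    log_mul hφa.ne' (rpow_pos_of_pos (div_pos hra hrb) k).ne', log_rpow (by positivity), log_div hra.ne' hrb.ne']
  linarith

end Monotonicity

theorem div_rpow_lt_two_of_mul_two_rpow_neg_inv_lt {R s k : ℝ} (hR : 0 < R) (hk : 0 < k)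
    (hs : R * 2 ^ (-k⁻¹) < s) :
    (R / s) ^ k < 2 := by
  have hs0 : 0 < s := lt_trans (by positivity) hs
  have hRs : R / s < 2 ^ k⁻¹ := by
    rw [div_lt_iff₀ hs0]
    calc R = 2 ^ k⁻¹ * (R * 2 ^ (-k⁻¹)) := by rw [rpow_neg zero_le_two]; field_simp
      _ < 2 ^ k⁻¹ * s := by gcongr
  calc (R / s) ^ k < (2 ^ k⁻¹) ^ k := by gcongr
    _ = 2 := rpow_inv_rpow zero_le_two hk.ne'

theorem stmt17_general (u c₃ c₄ rplus δ ε'' : ℝ) (hu : 0 ≤ u) (hc₃ : 0 < c₃) (hc₄ : 0 < c₄)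
    (hrp : 0 < rplus)
    (hδ : δ < rplus * (1 - (2:ℝ) ^ (-(c₄ * rplus / (4 * c₃) + 1)⁻¹ : ℝ)))
    (φv L r r' : ℝ → ℝ)
    (hφvne : ∀ t ∈ Set.Icc (0:ℝ) u, φv t ≠ 0)
    (hLd : ∀ t ∈ Set.Icc (0:ℝ) u, HasDerivAt (fun x => Real.log |φv x|) (L t) t)
    (hrd : ∀ t ∈ Set.Icc (0:ℝ) u, HasDerivAt r (r' t) t)
    (hL : ∀ t ∈ Set.Icc (0:ℝ) u,
      L t ≤ -(c₄ * rplus / (4 * c₃) + 1) * (r' t / r t))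
    (hrlow : ∀ t ∈ Set.Icc (0:ℝ) u, rplus - δ ≤ r t)
    (hrhigh : ∀ t ∈ Set.Icc (0:ℝ) u, r t ≤ rplus)
    (h0 : |φv 0| < ε'' / 2) :
    |φv u| < ε'' := by
  set k : ℝ := c₄ * rplus / (4 * c₃) + 1
  have hk : 0 < k := by positivity
  have hgap : rplus * 2 ^ (-k⁻¹) < rplus - δ := by linarith
  have hrδ : 0 < rplus - δ := lt_trans (by positivity) hgap
  have hr : ∀ t ∈ Icc 0 u, 0 < r t := fun t ht => hrδ.trans_le (hrlow t ht)
  have h0mem : (0 : ℝ) ∈ Icc 0 u := left_mem_Icc.mpr hu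
  have humem : u ∈ Icc 0 u := right_mem_Icc.mpr hu
  have hφ0 : 0 < |φv 0| := abs_pos.mpr (hφvne 0 h0mem)
  have hru := hr u humem
  calc |φv u| ≤ |φv 0| * (r 0 / r u) ^ k :=
        abs_le_abs_mul_div_rpow_of_deriv_log_le hu hφvne hr hLd hrd hL
    _ ≤ |φv 0| * (rplus / (rplus - δ)) ^ k := by
        have hr0 := hr 0 h0mem
        gcongr
        exacts [hrhigh 0 h0mem, hrlow u humem]
    _ < |φv 0| * 2 := by
        gcongr
        exact div_rpow_lt_two_of_mul_two_rpow_neg_inv_lt hrp hk hgap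
    _ < ε'' := by linarith

/-- If `∂ᵤ log|∂ᵥφ| ≤ −(c₄r₊/(4c₃) + 1) ∂ᵤ log r` on `[0,u]` with
`r₊ − δ ≤ r ≤ r₊`, `|∂ᵥφ(0)| < ε″/2`, and `δ < r₊(1 − 2^{−(c₄r₊/(4c₃)+1)⁻¹})`,
then `|∂ᵥφ(u)| < ε″`. -/
theorem stmt17 (u c₃ c₄ rplus δ ε'' : ℝ) (hu : 0 ≤ u) (hc₃ : 0 < c₃) (hc₄ : 0 < c₄)
    (hrp : 0 < rplus) (hδ0 : 0 < δ)
    (hδ : δ < rplus * (1 - (2:ℝ) ^ (-(c₄ * rplus / (4 * c₃) + 1)⁻¹ : ℝ)))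
    (φv L r r' : ℝ → ℝ)
    (hφvne : ∀ t ∈ Set.Icc (0:ℝ) u, φv t ≠ 0)
    (hrpos : ∀ t ∈ Set.Icc (0:ℝ) u, 0 < r t)
    (hLd : ∀ t ∈ Set.Icc (0:ℝ) u, HasDerivAt (fun x => Real.log |φv x|) (L t) t)
    (hrd : ∀ t ∈ Set.Icc (0:ℝ) u, HasDerivAt r (r' t) t)
    (hL : ∀ t ∈ Set.Icc (0:ℝ) u,
      L t ≤ -(c₄ * rplus / (4 * c₃) + 1) * (r' t / r t))
    (hrlow : ∀ t ∈ Set.Icc (0:ℝ) u, rplus - δ ≤ r t)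
    (hrhigh : ∀ t ∈ Set.Icc (0:ℝ) u, r t ≤ rplus)
    (h0 : |φv 0| < ε'' / 2) :
    |φv u| < ε'' :=
  stmt17_general u c₃ c₄ rplus δ ε'' hu hc₃ hc₄ hrp hδ φv L r r' hφvne hLd hrd hL hrlow hrhigh h0
end

section
/- If ∂²_{uv} r = (1/4)Ω²r^{-1}[2r²V(φ) + (1 − 2m/r) − 1] with Ω² = −4κ(∂_u r), κ ≥ 1/(4c₂), ∂_u r < 0, r ≤ r₊, V(φ) ≤ ε', and 1 − 2m/r ≤ 4c₂ε, and if 1 − 2r₊²ε' − 4c₂ε > 0, then ∂²_{uv} r ≤ a₂(∂_u r) < 0 where a₂ = (1 − 2r₊²ε' − 4c₂ε)/(4c₂r₊). -/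
/-! Since `Ω² = -4κ ∂ᵤr`, the wave equation reads `∂²ᵤᵥr = (κ/r)(-∂ᵤr)·B` with a nonnegative
prefactor, and the smallness assumptions bound the bracket `B` by `-(1 - 2r₊²ε' - 4c₂ε) < 0`.
The prefactor `κ/r` is at least `1/(4c₂r₊)`, which gives the claimed bound. -/

lemma wave_bracket_le_neg {r rplus m Vφ c₂ ε ε' : ℝ} (hr : 0 < r) (hrp : r ≤ rplus)
    (hV0 : 0 ≤ Vφ) (hV : Vφ ≤ ε') (hX : 1 - 2 * m / r ≤ 4 * c₂ * ε) :
    2 * r ^ 2 * Vφ + (1 - 2 * m / r) - 1 ≤ -(1 - 2 * rplus ^ 2 * ε' - 4 * c₂ * ε) := by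
  have hpot : r ^ 2 * Vφ ≤ rplus ^ 2 * ε' :=
    mul_le_mul (pow_le_pow_left₀ hr.le hrp 2) hV hV0 (by positivity)
  linarith

lemma mul_neg_mul_le_mul_mul_of_le_neg {k a u B P : ℝ} (ha : 0 ≤ a) (hak : a ≤ k) (hu : u < 0)
    (hP : 0 ≤ P) (hB : B ≤ -P) : k * -u * B ≤ a * P * u := by
  calc k * -u * B ≤ k * -u * -P := mul_le_mul_of_nonneg_left hB (by nlinarith)
    _ = -(k * (P * -u)) := by ring
    _ ≤ -(a * (P * -u)) := neg_le_neg (mul_le_mul_of_nonneg_right hak (by nlinarith))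
    _ = a * P * u := by ring

/-- If `∂²ᵤᵥr = (1/4)Ω²r⁻¹[2r²V(φ) + (1 − 2m/r) − 1]` with `Ω² = −4κ∂ᵤr`,
`κ ≥ 1/(4c₂)`, `∂ᵤr < 0`, `0 < r ≤ r₊`, `0 ≤ V(φ) ≤ ε'`, `1 − 2m/r ≤ 4c₂ε`, and
`1 − 2r₊²ε' − 4c₂ε > 0`, then `∂²ᵤᵥr ≤ a₂ ∂ᵤr < 0` with
`a₂ = (1 − 2r₊²ε' − 4c₂ε)/(4c₂r₊)`. -/
theorem stmt18 (ruv Ω κ ru r rplus m Vφ c₂ ε ε' : ℝ)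
    (hc₂ : 0 < c₂) (hru : ru < 0) (hr : 0 < r) (hrp : r ≤ rplus)
    (hΩ : Ω ^ 2 = -4 * κ * ru) (hκ : 1 / (4 * c₂) ≤ κ)
    (hV0 : 0 ≤ Vφ) (hV : Vφ ≤ ε') (hX : 1 - 2 * m / r ≤ 4 * c₂ * ε)
    (hpos : 0 < 1 - 2 * rplus ^ 2 * ε' - 4 * c₂ * ε)
    (hruv : ruv = 1 / 4 * Ω ^ 2 * r⁻¹ * (2 * r ^ 2 * Vφ + (1 - 2 * m / r) - 1)) :
    ruv ≤ (1 - 2 * rplus ^ 2 * ε' - 4 * c₂ * ε) / (4 * c₂ * rplus) * ru ∧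
    (1 - 2 * rplus ^ 2 * ε' - 4 * c₂ * ε) / (4 * c₂ * rplus) * ru < 0 := by
  have hrplus : 0 < rplus := hr.trans_le hrp
  have hcoeff : 1 / (4 * c₂) / rplus ≤ κ / r :=
    div_le_div₀ ((by positivity : (0 : ℝ) < 1 / (4 * c₂)).le.trans hκ) hκ hr hrp
  have hruv' : ruv = κ / r * -ru * (2 * r ^ 2 * Vφ + (1 - 2 * m / r) - 1) := by
    rw [hruv, hΩ]; ring
  refine ⟨?_, mul_neg_of_pos_of_neg (by positivity) hru⟩
  calc ruv ≤ 1 / (4 * c₂) / rplus * (1 - 2 * rplus ^ 2 * ε' - 4 * c₂ * ε) * ru :=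
        hruv' ▸ mul_neg_mul_le_mul_mul_of_le_neg (by positivity) hcoeff hru hpos.le
          (wave_bracket_le_neg hr hrp hV0 hV hX)
    _ = (1 - 2 * rplus ^ 2 * ε' - 4 * c₂ * ε) / (4 * c₂ * rplus) * ru := by
        field_simp
end

section
/- Suppose ∂_u(V(φ)) ≤ 4c₃r₊^{-1}|∂_vφ||∂_uφ| pointwise in u ∈ [0,u], with |∂_vφ| ≤ ε″, |∂_uφ| ≤ √c₁|∂_u r|, ∂_u r < 0, r(0) − r(u) ≤ δ, V(φ(0)) < ε'/2, and 4√c₁c₃r₊^{-1}ε″δ < ε'/2. Then V(φ(u)) < ε'. -/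
/-! Since `∂ᵤr < 0`, the bound `∂ᵤ(V(φ)) ≤ 4c₃r₊⁻¹ε″√c₁|∂ᵤr|` reads `∂ᵤ(V(φ) + K r) ≤ 0` with
`K = 4√c₁c₃r₊⁻¹ε″`. So `V(φ) + K r` is nonincreasing, and `V(φ(u)) ≤ V(φ(0)) + K (r 0 − r u)
≤ V(φ(0)) + K δ < ε'/2 + ε'/2`. -/

open Set

lemma mul_abs_mul_abs_le_mul_neg {A x y ε s ρ : ℝ} (hA : 0 ≤ A) (hx : |x| ≤ ε)
    (hy : |y| ≤ s * |ρ|) (hρ : ρ ≤ 0) : A * |x| * |y| ≤ A * ε * s * -ρ := by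
  have hε : 0 ≤ ε := (abs_nonneg x).trans hx
  calc A * |x| * |y| ≤ A * ε * (s * |ρ|) := by gcongr
    _ = A * ε * s * -ρ := by rw [abs_of_nonpos hρ]; ring

lemma sub_le_mul_sub_of_hasDerivAt {W W' r r' : ℝ → ℝ} {a b K : ℝ} (hab : a ≤ b)
    (hW : ∀ t ∈ Icc a b, HasDerivAt W (W' t) t) (hr : ∀ t ∈ Icc a b, HasDerivAt r (r' t) t)
    (hle : ∀ t ∈ Icc a b, W' t ≤ K * -r' t) :
    W b - W a ≤ K * (r a - r b) := by
  have hg : ∀ t ∈ Icc a b, HasDerivAt (fun t => W t + K * r t) (W' t + K * r' t) t :=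
    fun t ht => (hW t ht).add ((hr t ht).const_mul K)
  have hanti : AntitoneOn (fun t => W t + K * r t) (Icc a b) := by
    refine antitoneOn_of_hasDerivWithinAt_nonpos (convex_Icc a b)
      (fun t ht => (hg t ht).continuousAt.continuousWithinAt)
      (fun t ht => (hg t (interior_subset ht)).hasDerivWithinAt) fun t ht => ?_
    linarith [hle t (interior_subset ht)]
  have := hanti (left_mem_Icc.mpr hab) (right_mem_Icc.mpr hab) hab
  simp only at this
  linarith

theorem stmt19_general (u c₁ c₃ rplus δ ε' ε'' : ℝ) (hu : 0 ≤ u)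
    (hc₃ : 0 < c₃) (hrp : 0 < rplus) (hε'' : 0 ≤ ε'')
    (hsmall : 4 * Real.sqrt c₁ * c₃ * rplus⁻¹ * ε'' * δ < ε' / 2)
    (W W' φu φv r r' : ℝ → ℝ)
    (hWd : ∀ t ∈ Set.Icc (0:ℝ) u, HasDerivAt W (W' t) t)
    (hrd : ∀ t ∈ Set.Icc (0:ℝ) u, HasDerivAt r (r' t) t)
    (hW' : ∀ t ∈ Set.Icc (0:ℝ) u, W' t ≤ 4 * c₃ * rplus⁻¹ * |φv t| * |φu t|)
    (hφv : ∀ t ∈ Set.Icc (0:ℝ) u, |φv t| ≤ ε'')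
    (hφu : ∀ t ∈ Set.Icc (0:ℝ) u, |φu t| ≤ Real.sqrt c₁ * |r' t|)
    (hr' : ∀ t ∈ Set.Icc (0:ℝ) u, r' t < 0)
    (hrδ : r 0 - r u ≤ δ)
    (hW0 : W 0 < ε' / 2) :
    W u < ε' := by
  set K := 4 * Real.sqrt c₁ * c₃ * rplus⁻¹ * ε''
  have hK : 0 ≤ K := by positivity
  have hW'K : ∀ t ∈ Icc (0:ℝ) u, W' t ≤ K * -r' t := fun t ht =>
    (hW' t ht).trans <| (mul_abs_mul_abs_le_mul_neg (by positivity) (hφv t ht) (hφu t ht)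
      (hr' t ht).le).trans_eq (by ring)
  have hWu := sub_le_mul_sub_of_hasDerivAt hu hWd hrd hW'K
  have hKδ : K * (r 0 - r u) ≤ K * δ := mul_le_mul_of_nonneg_left hrδ hK
  linarith

/-- If `∂ᵤ(V(φ)) ≤ 4c₃r₊⁻¹|∂ᵥφ||∂ᵤφ|` on `[0,u]` with `|∂ᵥφ| ≤ ε″`,
`|∂ᵤφ| ≤ √c₁|∂ᵤr|`, `∂ᵤr < 0`, `r 0 − r u ≤ δ`, `V(φ(0)) < ε'/2`, and
`4√c₁ c₃ r₊⁻¹ ε″ δ < ε'/2`, then `V(φ(u)) < ε'`. -/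
theorem stmt19 (u c₁ c₃ rplus δ ε' ε'' : ℝ) (hu : 0 ≤ u) (hc₁ : 0 < c₁)
    (hc₃ : 0 < c₃) (hrp : 0 < rplus) (hδ : 0 ≤ δ) (hε'' : 0 ≤ ε'')
    (hsmall : 4 * Real.sqrt c₁ * c₃ * rplus⁻¹ * ε'' * δ < ε' / 2)
    (W W' φu φv r r' : ℝ → ℝ)
    (hWd : ∀ t ∈ Set.Icc (0:ℝ) u, HasDerivAt W (W' t) t)
    (hrd : ∀ t ∈ Set.Icc (0:ℝ) u, HasDerivAt r (r' t) t)
    (hW' : ∀ t ∈ Set.Icc (0:ℝ) u, W' t ≤ 4 * c₃ * rplus⁻¹ * |φv t| * |φu t|)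
    (hφv : ∀ t ∈ Set.Icc (0:ℝ) u, |φv t| ≤ ε'')
    (hφu : ∀ t ∈ Set.Icc (0:ℝ) u, |φu t| ≤ Real.sqrt c₁ * |r' t|)
    (hr' : ∀ t ∈ Set.Icc (0:ℝ) u, r' t < 0)
    (hrδ : r 0 - r u ≤ δ)
    (hW0 : W 0 < ε' / 2) :
    W u < ε' :=
  stmt19_general u c₁ c₃ rplus δ ε' ε'' hu hc₃ hrp hε'' hsmall W W' φu φv r r' hWd hrd hW' hφv hφu
    hr' hrδ hW0
end
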